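/- arXiv:2212.02151 — 4 statements merged into one kernel-verified Lean document; each statement's English description precedes it below -/
import Mathlib

section
/- Let a₁, b₂, c₂, d₃, e₄ ∈ ℂ[y,z] be homogeneous polynomials of degrees 1, 2, 2, 3, 4 respectively. Then there exist complex numbers λ, α, β, γ, δ satisfying the five relations α+γ = 2a₁(λ,1), β+δ = b₂(λ,1) + λ³, αγ = c₂(λ,1) − λ³, αδ+βγ = d₃(λ,1), βδ = e₄(λ,1). -/
/-!
Put `w = tz + x²`. On the plane `y = λz` (with `z = 1`) the quartic becomes the conic
`w² + (2a₁ x + b₂ + λ³) w + (c₂ - λ³) x² + d₃ x + e₄`, with coefficients evaluated at `(λ, 1)`.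
It splits as `(w + αx + β)(w + γx + δ)`, which is exactly the five relations, as soon as its
discriminant in `w`, a quadratic polynomial in `x`, is a perfect square, i.e. as soon as the
discriminant of that quadratic vanishes. As a function of `λ`, this last discriminant is a monic
polynomial of degree 9, so it has a root over `ℂ`.
-/

open MvPolynomial

theorem MvPolynomial.eval_aeval_X_one {R : Type*} [CommSemiring R] (q : MvPolynomial (Fin 2) R)
    (l : R) : (aeval ![Polynomial.X, 1] q).eval l = eval ![l, 1] q := by
  have hpt : (fun i ↦ Polynomial.aeval l (![(Polynomial.X : Polynomial R), 1] i)) = ![l, 1] := by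
    ext i; fin_cases i <;> simp
  rw [← coe_aeval_eq_eval, ← Polynomial.coe_aeval_eq_eval, comp_aeval_apply, hpt]
  rfl

theorem MvPolynomial.IsHomogeneous.natDegree_aeval_X_one_le {R : Type*} [CommSemiring R]
    {q : MvPolynomial (Fin 2) R} {n : ℕ} (h : q.IsHomogeneous n) :
    (MvPolynomial.aeval ![(Polynomial.X : Polynomial R), 1] q).natDegree ≤ n := by
  simpa using aeval_natDegree_le q h.totalDegree_le ![Polynomial.X, 1] (n := 1) fun i ↦ by
    fin_cases i <;> simp [Polynomial.natDegree_X_le]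

theorem exists_sq_eq_sq_eq_mul_eq_of_mul_eq_sq {R : Type*} [CommRing R] [IsDomain R]
    {p r k : R} (hp : IsSquare p) (hr : IsSquare r) (h : p * r = k ^ 2) :
    ∃ u s, u ^ 2 = p ∧ s ^ 2 = r ∧ u * s = k := by
  obtain ⟨u, rfl⟩ := hp
  obtain ⟨s, rfl⟩ := hr
  have : (u * s - k) * (u * s + k) = 0 := by linear_combination h
  rcases mul_eq_zero.mp this with h | h
  · exact ⟨u, s, by ring, by ring, by linear_combination h⟩
  · exact ⟨-u, s, by ring, by ring, by linear_combination -h⟩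

/- The conclusion says `w² + (2a x + m) w + (c x² + d x + e) = (w + α x + β) (w + γ x + δ)`. -/
theorem exists_factorization_of_discriminant_eq_zero {K : Type*} [Field K] [NeZero (2 : K)]
    {a m c d e : K} (hac : IsSquare (a ^ 2 - c)) (hme : IsSquare (m ^ 2 - 4 * e))
    (h : (a ^ 2 - c) * (m ^ 2 - 4 * e) = (d - a * m) ^ 2) :
    ∃ α β γ δ : K, α + γ = 2 * a ∧ β + δ = m ∧ α * γ = c ∧ α * δ + β * γ = d ∧ β * δ = e := by
  obtain ⟨u, s, hu, hs, hus⟩ := exists_sq_eq_sq_eq_mul_eq_of_mul_eq_sq hac hme h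
  refine ⟨a - u, (m + s) / 2, a + u, (m - s) / 2, by ring, by field_simp; ring, ?_, ?_, ?_⟩
  · linear_combination -hu
  · field_simp; linear_combination 2 * hus
  · field_simp; linear_combination -hs

namespace Polynomial

variable {R : Type*} [CommRing R]

theorem Monic.add_of_natDegree_lt {p q : R[X]} {n : ℕ} (hp : p.Monic) (hpn : p.natDegree = n)
    (hq : q.natDegree < n) : (p + q).Monic ∧ (p + q).natDegree = n := by
  subst hpn
  exact ⟨hp.add_of_left (degree_lt_degree hq), natDegree_add_eq_left_of_natDegree_lt hq⟩

theorem Monic.sub_of_natDegree_lt {p q : R[X]} {n : ℕ} (hp : p.Monic) (hpn : p.natDegree = n)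
    (hq : q.natDegree < n) : (p - q).Monic ∧ (p - q).natDegree = n := by
  rw [sub_eq_add_neg]
  exact hp.add_of_natDegree_lt hpn (by rwa [natDegree_neg])

/-- The discriminant `Ξ` of the conic fibration, in the affine coordinate `λ = y / z`; up to the
factor `-16` it is the discriminant of `exists_factorization_of_discriminant_eq_zero` with
`a = A(λ)`, `m = B(λ) + λ³`, `c = C(λ) - λ³`, `d = D(λ)`, `e = E(λ)`. -/
noncomputable def conicDiscriminant (A B C D E : R[X]) : R[X] :=
  (X ^ 3 + (A ^ 2 - C)) * ((X ^ 3 + B) ^ 2 - 4 * E) - (D - A * (X ^ 3 + B)) ^ 2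

variable {A B C D E : R[X]}

theorem eval_conicDiscriminant (l : R) :
    (conicDiscriminant A B C D E).eval l =
      (l ^ 3 + (A.eval l ^ 2 - C.eval l)) * ((l ^ 3 + B.eval l) ^ 2 - 4 * E.eval l) -
        (D.eval l - A.eval l * (l ^ 3 + B.eval l)) ^ 2 := by
  simp [conicDiscriminant]

theorem monic_conicDiscriminant [Nontrivial R] (hA : A.natDegree ≤ 1) (hB : B.natDegree ≤ 2)
    (hC : C.natDegree ≤ 2) (hD : D.natDegree ≤ 3) (hE : E.natDegree ≤ 4) :
    (conicDiscriminant A B C D E).Monic ∧ (conicDiscriminant A B C D E).natDegree = 9 := by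
  unfold conicDiscriminant
  have hX : (X ^ 3 : R[X]).Monic ∧ (X ^ 3 : R[X]).natDegree = 3 :=
    ⟨monic_X_pow 3, natDegree_X_pow 3⟩
  have hP := hX.1.add_of_natDegree_lt hX.2
    ((natDegree_sub_le_of_le (natDegree_pow_le_of_le 2 hA) hC).trans_lt (by norm_num))
  have hM := hX.1.add_of_natDegree_lt hX.2 (hB.trans_lt (by norm_num))
  have hR := (hM.1.pow 2).sub_of_natDegree_lt (by rw [hM.1.natDegree_pow, hM.2])
    ((natDegree_mul_le_of_le (natDegree_ofNat 4).le hE).trans_lt (by norm_num))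
  have hK : (D - A * (X ^ 3 + B)).natDegree ≤ 4 :=
    (natDegree_sub_le_of_le hD (natDegree_mul_le_of_le hA hM.2.le)).trans (by norm_num)
  exact (hP.1.mul hR.1).sub_of_natDegree_lt (by rw [hP.1.natDegree_mul hR.1, hP.2, hR.2])
    ((natDegree_pow_le_of_le 2 hK).trans_lt (by norm_num))

theorem exists_isRoot_conicDiscriminant {K : Type*} [Field K] [IsAlgClosed K]
    {A B C D E : K[X]} (hA : A.natDegree ≤ 1) (hB : B.natDegree ≤ 2) (hC : C.natDegree ≤ 2)
    (hD : D.natDegree ≤ 3) (hE : E.natDegree ≤ 4) :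
    ∃ l, (conicDiscriminant A B C D E).IsRoot l := by
  obtain ⟨hmonic, hdeg⟩ := monic_conicDiscriminant hA hB hC hD hE
  exact IsAlgClosed.exists_root _ (by rw [degree_eq_natDegree hmonic.ne_zero, hdeg]; decide)

end Polynomial

/-- In `ℂ[y,z]`, `y = X 0` and `z = X 1`. -/
theorem stmt_4 (a b c d e : MvPolynomial (Fin 2) ℂ)
    (ha : a.IsHomogeneous 1) (hb : b.IsHomogeneous 2) (hc : c.IsHomogeneous 2)
    (hd : d.IsHomogeneous 3) (he : e.IsHomogeneous 4) :
    ∃ l α β γ δ : ℂ,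
      α + γ = 2 * eval ![l, 1] a ∧
      β + δ = eval ![l, 1] b + l ^ 3 ∧
      α * γ = eval ![l, 1] c - l ^ 3 ∧
      α * δ + β * γ = eval ![l, 1] d ∧
      β * δ = eval ![l, 1] e := by
  obtain ⟨l, hl⟩ := Polynomial.exists_isRoot_conicDiscriminant ha.natDegree_aeval_X_one_le
    hb.natDegree_aeval_X_one_le hc.natDegree_aeval_X_one_le hd.natDegree_aeval_X_one_le
    he.natDegree_aeval_X_one_le
  simp only [Polynomial.IsRoot.def, Polynomial.eval_conicDiscriminant, eval_aeval_X_one] at hl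
  obtain ⟨α, β, γ, δ, h⟩ := exists_factorization_of_discriminant_eq_zero
    (a := eval ![l, 1] a) (m := eval ![l, 1] b + l ^ 3) (c := eval ![l, 1] c - l ^ 3)
    (d := eval ![l, 1] d) (e := eval ![l, 1] e)
    (IsAlgClosed.exists_eq_mul_self _) (IsAlgClosed.exists_eq_mul_self _)
    (by linear_combination hl)
  exact ⟨l, α, β, γ, δ, h⟩
end

section
/- Let g, h, i ∈ ℂ[t,x,y] be homogeneous polynomials of degree 2 and set F = g·y² + h·yz + i·z² ∈ ℂ[t,x,y,z] and Δ' = Y²Z² + h(T,X,Y)·YZ + g(T,X,Y)·i(T,X,Y) ∈ ℂ[T,X,Y,Z]. Then substituting (T,X,Y,Z) = (tz, xz, yz, g(t,x,y)) gives the identity Δ'(tz, xz, yz, g(t,x,y)) = z²·g(t,x,y)·F(t,x,y,z) in ℂ[t,x,y,z]. -/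
/-!
By homogeneity, the substitution `(T, X, Y, Z) ↦ (tz, xz, yz, g)` multiplies every quadric in
`T, X, Y` by `z²`; it sends `Y²Z²` to `z² g · y² g` and `h·YZ` to `z² g · h yz`, while `g·i`
becomes `z⁴ g i = z² g · i z²`.
-/

open MvPolynomial

theorem MvPolynomial.IsHomogeneous.aeval_mul_const {σ R S : Type*} [CommSemiring R]
    [CommSemiring S] [Algebra R S] {p : MvPolynomial σ R} {n : ℕ} (hp : p.IsHomogeneous n)
    (v : σ → S) (w : S) :
    MvPolynomial.aeval (fun j => v j * w) p = w ^ n * MvPolynomial.aeval v p := by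
  rw [aeval_def, aeval_def, eval₂_eq, eval₂_eq, Finset.mul_sum]
  refine Finset.sum_congr rfl fun d hd => ?_
  have hdeg : ∑ j ∈ d.support, d j = n := by
    rw [← Finsupp.degree_apply, Finsupp.degree_eq_weight_one]
    exact hp (mem_support_iff.mp hd)
  simp only [mul_pow, Finset.prod_mul_distrib, Finset.prod_pow_eq_pow_sum, hdeg]
  ring

theorem aeval_mul_X_three_of_isHomogeneous {R : Type*} [CommSemiring R]
    {p : MvPolynomial (Fin 3) R} {n : ℕ} (hp : p.IsHomogeneous n) (q : MvPolynomial (Fin 4) R) :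
    aeval ![X 0 * X 3, X 1 * X 3, X 2 * X 3, q]
        (aeval ![(X 0 : MvPolynomial (Fin 4) R), X 1, X 2] p)
      = X 3 ^ n * aeval ![(X 0 : MvPolynomial (Fin 4) R), X 1, X 2] p := by
  rw [← AlgHom.comp_apply, comp_aeval, ← hp.aeval_mul_const]
  congr 2
  funext j
  fin_cases j <;> simp

/-- For `g,h,i ∈ ℂ[t,x,y]` homogeneous of degree `2`, setting
`F = g·y² + h·yz + i·z²` and `Δ' = Y²Z² + h(T,X,Y)·YZ + g(T,X,Y)·i(T,X,Y)`, substituting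
`(T,X,Y,Z) = (tz, xz, yz, g(t,x,y))` into `Δ'` yields `z² · g · F`.
Variables: in `ℂ[t,x,y,z]` (and `ℂ[T,X,Y,Z]`) we use `t = X 0`, `x = X 1`, `y = X 2`,
`z = X 3`; in `ℂ[t,x,y]` we use `t = X 0`, `x = X 1`, `y = X 2`. -/
theorem stmt_8 (g h i : MvPolynomial (Fin 3) ℂ)
    (hg : g.IsHomogeneous 2) (hh : h.IsHomogeneous 2) (hi : i.IsHomogeneous 2)
    (F : MvPolynomial (Fin 4) ℂ)
    (hF : F = aeval ![(X 0 : MvPolynomial (Fin 4) ℂ), X 1, X 2] g * X 2 ^ 2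
      + aeval ![(X 0 : MvPolynomial (Fin 4) ℂ), X 1, X 2] h * (X 2 * X 3)
      + aeval ![(X 0 : MvPolynomial (Fin 4) ℂ), X 1, X 2] i * X 3 ^ 2)
    (Δ' : MvPolynomial (Fin 4) ℂ)
    (hΔ' : Δ' = X 2 ^ 2 * X 3 ^ 2
      + aeval ![(X 0 : MvPolynomial (Fin 4) ℂ), X 1, X 2] h * (X 2 * X 3)
      + aeval ![(X 0 : MvPolynomial (Fin 4) ℂ), X 1, X 2] g
        * aeval ![(X 0 : MvPolynomial (Fin 4) ℂ), X 1, X 2] i) :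
    aeval ![(X 0 * X 3 : MvPolynomial (Fin 4) ℂ), X 1 * X 3, X 2 * X 3,
        aeval ![(X 0 : MvPolynomial (Fin 4) ℂ), X 1, X 2] g] Δ'
      = X 3 ^ 2 * aeval ![(X 0 : MvPolynomial (Fin 4) ℂ), X 1, X 2] g * F := by
  subst hF hΔ'
  simp only [map_add, map_mul, map_pow, aeval_X, Matrix.cons_val,
    aeval_mul_X_three_of_isHomogeneous hg, aeval_mul_X_three_of_isHomogeneous hh,
    aeval_mul_X_three_of_isHomogeneous hi]
  ring
end

section
/- Let q ∈ ℂ[x,y,z] be a quadratic form of rank 3 (so that C = V(t, q) ⊂ ℙ³ is a smooth plane conic). If F ∈ ℂ[t,x,y,z] is homogeneous of degree 4 and F together with its four partial derivatives vanishes at every point of the affine cone over C (i.e. at every (t,x,y,z) ∈ ℂ⁴ with t = 0 and q(x,y,z) = 0), then there exist α ∈ ℂ, a homogeneous linear form a₁ ∈ ℂ[t,x,y,z], and a homogeneous quadratic form b₂ ∈ ℂ[t,x,y,z] such that F = α·q² + a₁·t·q + b₂·t². -/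
open MvPolynomial Matrix

namespace Stmt12Aux

set_option linter.unusedSectionVars false
variable {σ : Type*} [Fintype σ] [DecidableEq σ]

lemma degree_add (d₁ d₂ : σ →₀ ℕ) : (d₁ + d₂).degree = d₁.degree + d₂.degree := by
  simp only [Finsupp.degree_eq_weight_one]
  exact map_add _ _ _

lemma hc_mul_top (u v : MvPolynomial σ ℂ) {a b : ℕ}
    (hu : ∀ d, coeff d u ≠ 0 → d.degree ≤ a) (hv : ∀ d, coeff d v ≠ 0 → d.degree ≤ b) :
    homogeneousComponent (a + b) (u * v)
      = homogeneousComponent a u * homogeneousComponent b v := by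
  apply MvPolynomial.ext
  intro d
  rw [coeff_homogeneousComponent]
  by_cases hd : d.degree = a + b
  · rw [if_pos hd, coeff_mul, coeff_mul]
    apply Finset.sum_congr rfl
    rintro ⟨d₁, d₂⟩ hmem
    dsimp only
    have hd12 : d₁ + d₂ = d := Finset.HasAntidiagonal.mem_antidiagonal.mp hmem
    have hdeg : d₁.degree + d₂.degree = a + b := by
      rw [← degree_add, hd12, hd]
    rw [coeff_homogeneousComponent, coeff_homogeneousComponent]
    by_cases h1 : d₁.degree = a
    · rw [if_pos h1, if_pos (by omega)]
    · rw [if_neg h1, zero_mul]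
      by_cases hcu : coeff d₁ u = 0
      · rw [hcu, zero_mul]
      · have h1le := hu d₁ hcu
        have : coeff d₂ v = 0 := by
          by_contra hcv
          have := hv d₂ hcv
          omega
        rw [this, mul_zero]
  · rw [if_neg hd]
    exact (((homogeneousComponent_isHomogeneous a u).mul
      (homogeneousComponent_isHomogeneous b v)).coeff_eq_zero hd).symm

lemma hc_mul_bot (u v : MvPolynomial σ ℂ) {a b : ℕ}
    (hu : ∀ d, coeff d u ≠ 0 → a ≤ d.degree) (hv : ∀ d, coeff d v ≠ 0 → b ≤ d.degree) :
    homogeneousComponent (a + b) (u * v)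
      = homogeneousComponent a u * homogeneousComponent b v := by
  apply MvPolynomial.ext
  intro d
  rw [coeff_homogeneousComponent]
  by_cases hd : d.degree = a + b
  · rw [if_pos hd, coeff_mul, coeff_mul]
    apply Finset.sum_congr rfl
    rintro ⟨d₁, d₂⟩ hmem
    dsimp only
    have hd12 : d₁ + d₂ = d := Finset.HasAntidiagonal.mem_antidiagonal.mp hmem
    have hdeg : d₁.degree + d₂.degree = a + b := by
      rw [← degree_add, hd12, hd]
    rw [coeff_homogeneousComponent, coeff_homogeneousComponent]
    by_cases h1 : d₁.degree = a
    · rw [if_pos h1, if_pos (by omega)]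
    · rw [if_neg h1, zero_mul]
      by_cases hcu : coeff d₁ u = 0
      · rw [hcu, zero_mul]
      · have h1le := hu d₁ hcu
        have : coeff d₂ v = 0 := by
          by_contra hcv
          have := hv d₂ hcv
          omega
        rw [this, mul_zero]
  · rw [if_neg hd]
    exact (((homogeneousComponent_isHomogeneous a u).mul
      (homogeneousComponent_isHomogeneous b v)).coeff_eq_zero hd).symm



lemma degree_le_td {p : MvPolynomial σ ℂ} {d : σ →₀ ℕ} (h : coeff d p ≠ 0) :
    d.degree ≤ p.totalDegree :=
  le_totalDegree (mem_support_iff.mpr h)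

lemma exists_top {p : MvPolynomial σ ℂ} (hp : p ≠ 0) :
    ∃ d, coeff d p ≠ 0 ∧ d.degree = p.totalDegree := by
  obtain ⟨d, hd, he⟩ := Finset.exists_mem_eq_sup p.support
    (support_nonempty.mpr hp) (fun s => s.sum fun _ e => e)
  exact ⟨d, mem_support_iff.mp hd, he.symm⟩

/-- Factors of a nonzero homogeneous polynomial are homogeneous, and degrees add up. -/
lemma factor_homog {u v : MvPolynomial σ ℂ} {k : ℕ} (h : (u * v).IsHomogeneous k)
    (hu : u ≠ 0) (hv : v ≠ 0) :
    u.IsHomogeneous u.totalDegree ∧ v.IsHomogeneous v.totalDegree ∧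
      u.totalDegree + v.totalDegree = k := by
  classical
  have hcne : ∀ (w : MvPolynomial σ ℂ), w ≠ 0 →
      homogeneousComponent w.totalDegree w ≠ 0 := by
    intro w hw
    obtain ⟨d, hd, hdeg⟩ := exists_top hw
    intro hzero
    apply hd
    have hcc : coeff d (homogeneousComponent w.totalDegree w) = coeff d w := by
      rw [coeff_homogeneousComponent, if_pos hdeg]
    rw [hzero, coeff_zero] at hcc
    exact hcc.symm
  -- min degrees
  set Su := u.support.image Finsupp.degree with hSu
  set Sv := v.support.image Finsupp.degree with hSv
  have hSune : Su.Nonempty := (support_nonempty.mpr hu).image _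
  have hSvne : Sv.Nonempty := (support_nonempty.mpr hv).image _
  set mu := Su.min' hSune with hmu
  set mv := Sv.min' hSvne with hmv
  have hmin_u : ∀ d, coeff d u ≠ 0 → mu ≤ d.degree := fun d hd =>
    Finset.min'_le _ _ (Finset.mem_image_of_mem _ (mem_support_iff.mpr hd))
  have hmin_v : ∀ d, coeff d v ≠ 0 → mv ≤ d.degree := fun d hd =>
    Finset.min'_le _ _ (Finset.mem_image_of_mem _ (mem_support_iff.mpr hd))
  have hcmu : homogeneousComponent mu u ≠ 0 := by
    obtain ⟨d, hd, hdeg⟩ := Finset.mem_image.mp (Su.min'_mem hSune)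
    intro hzero
    apply mem_support_iff.mp hd
    rw [← hmu] at hdeg
    have hcc : coeff d (homogeneousComponent mu u) = coeff d u := by
      rw [coeff_homogeneousComponent, if_pos hdeg]
    rw [hzero, coeff_zero] at hcc
    exact hcc.symm
  have hcmv : homogeneousComponent mv v ≠ 0 := by
    obtain ⟨d, hd, hdeg⟩ := Finset.mem_image.mp (Sv.min'_mem hSvne)
    intro hzero
    apply mem_support_iff.mp hd
    rw [← hmv] at hdeg
    have hcc : coeff d (homogeneousComponent mv v) = coeff d v := by
      rw [coeff_homogeneousComponent, if_pos hdeg]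
    rw [hzero, coeff_zero] at hcc
    exact hcc.symm
  have hmem : u * v ∈ homogeneousSubmodule σ ℂ k := (mem_homogeneousSubmodule _ _).mpr h
  -- top degrees add to k
  have htop : u.totalDegree + v.totalDegree = k := by
    by_contra hne
    have h1 := hc_mul_top u v (fun d hd => degree_le_td hd) (fun d hd => degree_le_td hd)
    rw [homogeneousComponent_of_mem hmem, if_neg hne] at h1
    exact mul_ne_zero (hcne u hu) (hcne v hv) h1.symm
  have hbot : mu + mv = k := by
    by_contra hne
    have h1 := hc_mul_bot u v hmin_u hmin_v
    rw [homogeneousComponent_of_mem hmem, if_neg hne] at h1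
    exact mul_ne_zero hcmu hcmv h1.symm
  have hule : mu ≤ u.totalDegree := by
    obtain ⟨d, hd, hdeg⟩ := exists_top hu
    simpa [hdeg] using hmin_u d hd
  have hvle : mv ≤ v.totalDegree := by
    obtain ⟨d, hd, hdeg⟩ := exists_top hv
    simpa [hdeg] using hmin_v d hd
  have hueq : mu = u.totalDegree := by omega
  have hveq : mv = v.totalDegree := by omega
  refine ⟨?_, ?_, htop⟩
  · intro d hd
    have h1 := degree_le_td hd
    have h2 := hmin_u d hd
    rw [Finsupp.degree_eq_weight_one] at *
    have e : ∀ x : σ →₀ ℕ, Finsupp.weight (fun _ : σ => (1:ℕ)) x = Finsupp.weight (1 : σ → ℕ) x := fun _ => rfl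
    rw [e] at h1 h2
    omega
  · intro d hd
    have h1 := degree_le_td hd
    have h2 := hmin_v d hd
    rw [Finsupp.degree_eq_weight_one] at *
    have e : ∀ x : σ →₀ ℕ, Finsupp.weight (fun _ : σ => (1:ℕ)) x = Finsupp.weight (1 : σ → ℕ) x := fun _ => rfl
    rw [e] at h1 h2
    omega

lemma homog_zero_eq_C {p : MvPolynomial σ ℂ} (h : p.IsHomogeneous 0) :
    p = C (coeff 0 p) := by
  classical
  apply MvPolynomial.ext
  intro d
  by_cases hd : d = 0
  · simp [hd]
  · rw [coeff_C, if_neg (Ne.symm hd)]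
    by_contra hc
    have hdeg : d.degree = 0 := by rw [Finsupp.degree_eq_weight_one]; exact h hc
    exact hd ((Finsupp.degree_eq_zero_iff d).mp hdeg)

lemma homog_one_eq_sum {n : ℕ} {p : MvPolynomial (Fin n) ℂ} (h : p.IsHomogeneous 1) :
    p = ∑ j : Fin n, C (coeff (Finsupp.single j 1) p) * X j := by
  apply MvPolynomial.ext
  intro d
  rw [coeff_sum]
  by_cases hd : ∃ j : Fin n, d = Finsupp.single j 1
  · obtain ⟨j, rfl⟩ := hd
    rw [Finset.sum_eq_single j]
    · simp [coeff_C_mul, coeff_X']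
    · intro i _ hij
      rw [coeff_C_mul, coeff_X', if_neg, mul_zero]
      intro hcontra
      exact hij (by
        have := Finsupp.single_left_injective (α := Fin n) (one_ne_zero (α := ℕ)) hcontra
        exact this)
    · intro hj; exact absurd (Finset.mem_univ j) hj
  · push_neg at hd
    have h0 : coeff d p = 0 := by
      by_contra hc
      have hdeg : d.degree = 1 := by rw [Finsupp.degree_eq_weight_one]; exact h hc
      -- d has degree 1, so d = single j 1 for some j
      obtain ⟨j, hj⟩ : ∃ j, d = Finsupp.single j 1 := by
        have hne : d.support.Nonempty := by
          rw [Finsupp.support_nonempty_iff]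
          intro h0
          rw [h0, map_zero] at hdeg; exact one_ne_zero hdeg.symm
        obtain ⟨j, hjmem⟩ := hne
        refine ⟨j, ?_⟩
        have hdj : d j = 1 := by
          have h1 : 1 ≤ d j := Nat.one_le_iff_ne_zero.mpr (Finsupp.mem_support_iff.mp hjmem)
          have h2 : d j ≤ d.degree := Finsupp.le_degree j d
          omega
        ext i
        by_cases hij : i = j
        · simp [hij, hdj]
        · rw [Finsupp.single_apply, if_neg (by exact fun hc => hij hc.symm)]
          by_contra hne0
          have hi1 : 1 ≤ d i := Nat.one_le_iff_ne_zero.mpr hne0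
          have : 2 ≤ d.degree := by
            have : d j + d i ≤ d.degree := by
              unfold Finsupp.degree
              have hsub : {j, i} ⊆ d.support := by
                intro x hx
                simp only [Finset.mem_insert, Finset.mem_singleton] at hx
                rcases hx with rfl | rfl
                · exact hjmem
                · exact Finsupp.mem_support_iff.mpr hne0
              calc d j + d i = ∑ x ∈ ({j, i} : Finset (Fin n)), d x := by
                    rw [Finset.sum_pair (fun hc => hij hc.symm)]
                _ ≤ ∑ x ∈ d.support, d x := Finset.sum_le_sum_of_subset hsub
            omega
          omega
      exact hd j hj
    rw [h0]
    symm
    apply Finset.sum_eq_zero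
    intro i _
    rw [coeff_C_mul, coeff_X', if_neg (fun hc => hd i hc.symm), mul_zero]

lemma polar {S : Matrix (Fin 3) (Fin 3) ℂ} (hS : S.IsSymm)
    (h : ∀ v : Fin 3 → ℂ, v ⬝ᵥ S.mulVec v = 0) : S = 0 := by
  ext i j
  have h1 := h (Pi.single i 1 + Pi.single j 1)
  have h2 := h (Pi.single i 1)
  have h3 := h (Pi.single j 1)
  have e : ∀ a b : Fin 3, Pi.single a (1:ℂ) ⬝ᵥ S.mulVec (Pi.single b 1) = S a b := by
    intro a b
    rw [Matrix.mulVec_single, single_dotProduct]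
    simp
  rw [Matrix.mulVec_add, dotProduct_add, add_dotProduct,
    add_dotProduct, e, e, e, e] at h1
  rw [e] at h2 h3
  have hsym := hS.apply i j
  have : (2 : ℂ) * S i j = 0 := by
    rw [two_mul]
    calc S i j + S i j = S i j + S j i := by rw [hsym]
    _ = (S i i + S j i + (S i j + S j j)) - S i i - S j j := by ring
    _ = 0 := by rw [h1, h2, h3]; ring
  have h2ne : (2 : ℂ) ≠ 0 := two_ne_zero
  simpa [Matrix.zero_apply] using (mul_eq_zero.mp this).resolve_left h2ne

section QStruct
variable {q : MvPolynomial (Fin 3) ℂ} {M : Matrix (Fin 3) (Fin 3) ℂ}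

lemma q_struct (hqM : ∀ v : Fin 3 → ℂ, eval v q = v ⬝ᵥ M.mulVec v) :
    q = ∑ i : Fin 3, ∑ j : Fin 3, C (M i j) * X i * X j := by
  apply MvPolynomial.funext
  intro v
  rw [hqM]
  simp only [map_sum, _root_.map_mul, eval_C, eval_X, dotProduct, Matrix.mulVec,
    Finset.mul_sum]
  exact Finset.sum_congr rfl fun i _ => Finset.sum_congr rfl fun j _ => by ring

lemma q_ne_zero (hM : M.IsSymm) (hMdet : M.det ≠ 0)
    (hqM : ∀ v : Fin 3 → ℂ, eval v q = v ⬝ᵥ M.mulVec v) : q ≠ 0 := by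
  intro h0
  apply hMdet
  have : M = 0 := polar hM (fun v => by rw [← hqM, h0, map_zero])
  rw [this]
  simp

lemma q_pderiv (hM : M.IsSymm) (hqM : ∀ v : Fin 3 → ℂ, eval v q = v ⬝ᵥ M.mulVec v)
    (k : Fin 3) :
    pderiv k q = C 2 * ∑ j : Fin 3, C (M k j) * X j := by
  rw [q_struct hqM]
  simp only [map_sum, pderiv_mul, pderiv_C, zero_mul, zero_add, pderiv_X,
    Pi.single_apply, mul_ite, ite_mul, mul_one, mul_zero, one_mul, zero_mul, add_zero,
    zero_add]
  have split : (∑ x : Fin 3, ∑ y : Fin 3, (((if x = k then C (M x y) * X y else 0) : MvPolynomial (Fin 3) ℂ) + if y = k then C (M x y) * X x else 0))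
      = (∑ x : Fin 3, ∑ y : Fin 3, if x = k then C (M x y) * X y else 0)
        + ∑ x : Fin 3, ∑ y : Fin 3, if y = k then C (M x y) * X x else 0 := by
    rw [← Finset.sum_add_distrib]
    exact Finset.sum_congr rfl fun x _ => by rw [← Finset.sum_add_distrib]
  rw [split]
  have h1 : (∑ x : Fin 3, ∑ y : Fin 3, if x = k then C (M x y) * X y else 0)
      = ∑ y : Fin 3, C (M k y) * X y := by
    rw [Finset.sum_eq_single k]
    · simp
    · intro b _ hb; simp [hb]
    · intro h; simp at h
  have h2 : (∑ x : Fin 3, ∑ y : Fin 3, if y = k then C (M x y) * X x else 0)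
      = ∑ x : Fin 3, C (M k x) * X x := by
    rw [Finset.sum_comm]
    rw [Finset.sum_eq_single k]
    · exact Finset.sum_congr rfl fun x _ => by rw [if_pos rfl, hM.apply k x]
    · intro b _ hb; simp [hb]
    · intro h; simp at h
  rw [h1, h2, show (C 2 : MvPolynomial (Fin 3) ℂ) = 2 from by rw [map_ofNat]]
  ring

end QStruct

section QPrime
variable {q : MvPolynomial (Fin 3) ℂ} {M : Matrix (Fin 3) (Fin 3) ℂ}

lemma q_prime (hq : q.IsHomogeneous 2) (hM : M.IsSymm) (hMdet : M.det ≠ 0)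
    (hqM : ∀ v : Fin 3 → ℂ, eval v q = v ⬝ᵥ M.mulVec v) : Prime q := by
  have qne : q ≠ 0 := q_ne_zero hM hMdet hqM
  have htd : q.totalDegree = 2 := hq.totalDegree qne
  rw [← UniqueFactorizationMonoid.irreducible_iff_prime]
  constructor
  · intro hunit
    obtain ⟨w, hw⟩ := isUnit_iff_exists_inv.mp hunit
    have hwne : w ≠ 0 := by intro h0; rw [h0, mul_zero] at hw; exact one_ne_zero hw.symm
    have h1 : (q * w).IsHomogeneous 0 := by rw [hw]; exact isHomogeneous_one _ _
    obtain ⟨_, _, hsum⟩ := factor_homog h1 qne hwne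
    omega
  · intro a b hab
    by_contra hcon
    push_neg at hcon
    obtain ⟨ha, hb⟩ := hcon
    have hane : a ≠ 0 := by rintro rfl; rw [zero_mul] at hab; exact qne hab
    have hbne : b ≠ 0 := by rintro rfl; rw [mul_zero] at hab; exact qne hab
    obtain ⟨ha', hb', hsum⟩ := factor_homog (hab ▸ hq) hane hbne
    have hta : a.totalDegree ≠ 0 := by
      intro h0
      rw [h0] at ha'
      apply ha
      rw [homog_zero_eq_C ha']
      refine IsUnit.map C (isUnit_iff_ne_zero.mpr ?_)
      intro hc
      apply hane
      rw [homog_zero_eq_C ha', hc, map_zero]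
    have htb : b.totalDegree ≠ 0 := by
      intro h0
      rw [h0] at hb'
      apply hb
      rw [homog_zero_eq_C hb']
      refine IsUnit.map C (isUnit_iff_ne_zero.mpr ?_)
      intro hc
      apply hbne
      rw [homog_zero_eq_C hb', hc, map_zero]
    have hta1 : a.totalDegree = 1 := by omega
    have htb1 : b.totalDegree = 1 := by omega
    rw [hta1] at ha'
    rw [htb1] at hb'
    set a' : Fin 3 → ℂ := fun j => coeff (Finsupp.single j 1) a with ha'def
    set b' : Fin 3 → ℂ := fun j => coeff (Finsupp.single j 1) b with hb'def
    have haeval : ∀ v : Fin 3 → ℂ, eval v a = ∑ j : Fin 3, a' j * v j := by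
      intro v
      conv_lhs => rw [homog_one_eq_sum ha']
      simp [map_sum, ha'def]
    have hbeval : ∀ v : Fin 3 → ℂ, eval v b = ∑ j : Fin 3, b' j * v j := by
      intro v
      conv_lhs => rw [homog_one_eq_sum hb']
      simp [map_sum, hb'def]
    set A : Matrix (Fin 3) (Fin 3) ℂ :=
      Matrix.of fun i j => (a' i * b' j + a' j * b' i) / 2 with hAdef
    have hAsymm : A.IsSymm := Matrix.IsSymm.ext fun i j => by
      simp only [hAdef, Matrix.of_apply]; ring
    have hAq : ∀ v : Fin 3 → ℂ, v ⬝ᵥ A.mulVec v = eval v q := by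
      intro v
      rw [hab, _root_.map_mul, haeval, hbeval, Finset.sum_mul_sum]
      simp only [dotProduct, Matrix.mulVec, hAdef, Matrix.of_apply, Finset.mul_sum]
      have swap : ∑ i : Fin 3, ∑ j : Fin 3, a' j * b' i / 2 * v i * v j
          = ∑ i : Fin 3, ∑ j : Fin 3, a' i * b' j / 2 * v i * v j := by
        rw [Finset.sum_comm]
        exact Finset.sum_congr rfl fun i _ => Finset.sum_congr rfl fun j _ => by ring
      calc ∑ i : Fin 3, ∑ j : Fin 3, v i * ((a' i * b' j + a' j * b' i) / 2 * v j)
          = (∑ i : Fin 3, ∑ j : Fin 3, a' i * b' j / 2 * v i * v j)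
            + ∑ i : Fin 3, ∑ j : Fin 3, a' j * b' i / 2 * v i * v j := by
            rw [← Finset.sum_add_distrib]
            refine Finset.sum_congr rfl fun i _ => ?_
            rw [← Finset.sum_add_distrib]
            exact Finset.sum_congr rfl fun j _ => by ring
        _ = ∑ i : Fin 3, ∑ j : Fin 3, a' i * b' j * v i * v j := by
            rw [swap, ← Finset.sum_add_distrib]
            refine Finset.sum_congr rfl fun i _ => ?_
            rw [← Finset.sum_add_distrib]
            exact Finset.sum_congr rfl fun j _ => by ring
        _ = ∑ i : Fin 3, ∑ j : Fin 3, a' i * v i * (b' j * v j) := by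
            exact Finset.sum_congr rfl fun i _ => Finset.sum_congr rfl fun j _ => by ring
    have hMA : M = A := by
      have hsub : M - A = 0 := by
        apply polar (hM.sub hAsymm)
        intro v
        rw [Matrix.sub_mulVec, dotProduct_sub, hAq, ← hqM, sub_self]
      have := sub_eq_zero.mp hsub
      exact this
    apply hMdet
    rw [hMA]
    simp only [Matrix.det_fin_three, hAdef, Matrix.of_apply]
    ring

lemma vanish_dvd {p : MvPolynomial (Fin 3) ℂ} (hqp : Prime q)
    (h : ∀ v : Fin 3 → ℂ, eval v q = 0 → eval v p = 0) : q ∣ p := by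
  have hmem : p ∈ vanishingIdeal ℂ (zeroLocus ℂ (Ideal.span {q})) := by
    rw [mem_vanishingIdeal_iff]
    intro x hx
    exact h x (hx q (Ideal.subset_span rfl))
  rw [vanishingIdeal_zeroLocus_eq_radical, Ideal.mem_radical_iff] at hmem
  obtain ⟨n, hn⟩ := hmem
  rw [Ideal.mem_span_singleton] at hn
  exact hqp.dvd_of_dvd_pow hn

end QPrime

lemma fse_rename (f : MvPolynomial (Fin 3) ℂ) :
    finSuccEquiv ℂ 3 (rename Fin.succ f) = Polynomial.C f := by
  induction f using MvPolynomial.induction_on with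
  | C a => rw [rename_C]; simp [finSuccEquiv_apply]
  | add p q hp hq => rw [map_add, map_add, hp, hq, map_add]
  | mul_X p j hp =>
      rw [_root_.map_mul, _root_.map_mul, hp, rename_X, finSuccEquiv_X_succ, ← Polynomial.C_mul]

lemma pderiv0_rename (f : MvPolynomial (Fin 3) ℂ) :
    pderiv 0 (rename (Fin.succ : Fin 3 → Fin 4) f) = 0 := by
  induction f using MvPolynomial.induction_on with
  | C a => rw [rename_C, pderiv_C]
  | add p q hp hq => rw [map_add, map_add, hp, hq, add_zero]
  | mul_X p j hp =>
      rw [_root_.map_mul, rename_X, pderiv_mul, hp, zero_mul,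
        pderiv_X_of_ne (Fin.succ_ne_zero j), mul_zero, add_zero]

section QComb
variable {q : MvPolynomial (Fin 3) ℂ} {M : Matrix (Fin 3) (Fin 3) ℂ}

lemma q_comb (hM : M.IsSymm) (hMdet : M.det ≠ 0)
    (hqM : ∀ v : Fin 3 → ℂ, eval v q = v ⬝ᵥ M.mulVec v) (j : Fin 3) :
    ∑ k : Fin 3, C (M⁻¹ j k) * pderiv k q = C 2 * X j := by
  have hNM : M⁻¹ * M = 1 := Matrix.nonsing_inv_mul M (isUnit_iff_ne_zero.mpr hMdet)
  calc ∑ k : Fin 3, C (M⁻¹ j k) * pderiv k q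
      = ∑ k : Fin 3, ∑ l : Fin 3, C 2 * (C (M⁻¹ j k * M k l) * X l) := by
        refine Finset.sum_congr rfl fun k _ => ?_
        rw [q_pderiv hM hqM k, Finset.mul_sum, Finset.mul_sum]
        refine Finset.sum_congr rfl fun l _ => ?_
        rw [C_mul]; ring
    _ = C 2 * ∑ l : Fin 3, (∑ k : Fin 3, C (M⁻¹ j k * M k l)) * X l := by
        rw [Finset.sum_comm, Finset.mul_sum]
        refine Finset.sum_congr rfl fun l _ => ?_
        rw [← Finset.mul_sum, Finset.sum_mul]
    _ = C 2 * ∑ l : Fin 3, C ((M⁻¹ * M) j l) * X l := by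
        congr 1
        refine Finset.sum_congr rfl fun l _ => ?_
        rw [Matrix.mul_apply, map_sum]
    _ = C 2 * X j := by
        rw [hNM]
        congr 1
        simp only [Matrix.one_apply, apply_ite C, _root_.map_one, _root_.map_zero,
          ite_mul, one_mul, zero_mul]
        rw [Finset.sum_ite_eq]
        simp

lemma quot_homog {u g : MvPolynomial (Fin 3) ℂ} {n m : ℕ} (hu : u ≠ 0)
    (hun : u.IsHomogeneous n) (h : (u * g).IsHomogeneous (n + m)) : g.IsHomogeneous m := by
  by_cases hg : g = 0
  · rw [hg]; exact isHomogeneous_zero _ _ _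
  obtain ⟨hu', hg', hsum⟩ := factor_homog h hu hg
  have h1 : u.totalDegree = n := hu'.inj_right hun hu
  have h2 : g.totalDegree = m := by omega
  rwa [h2] at hg'

lemma quot_homog4 {u g : MvPolynomial (Fin 4) ℂ} {n m : ℕ} (hu : u ≠ 0)
    (hun : u.IsHomogeneous n) (h : (u * g).IsHomogeneous (n + m)) : g.IsHomogeneous m := by
  by_cases hg : g = 0
  · rw [hg]; exact isHomogeneous_zero _ _ _
  obtain ⟨hu', hg', hsum⟩ := factor_homog h hu hg
  have h1 : u.totalDegree = n := hu'.inj_right hun hu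
  have h2 : g.totalDegree = m := by omega
  rwa [h2] at hg'

end QComb

end Stmt12Aux


open Stmt12Aux in
/-- Let `q ∈ ℂ[x,y,z]` be a quadratic form of rank `3` (its symmetric Gram
matrix `M` has `det M ≠ 0`), so `C = V(t,q) ⊂ ℙ³` is a smooth plane conic. If a quartic
`F ∈ ℂ[t,x,y,z]` and its four partial derivatives vanish at every point of the affine cone
over `C`, then `F = α·q² + a₁·t·q + b₂·t²` with `α ∈ ℂ`, `a₁` a linear form and `b₂` a
quadratic form. Variables: in `ℂ[t,x,y,z]` we use `t = X 0`, `x = X 1`, `y = X 2`, `z = X 3`;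
in `ℂ[x,y,z]` we use `x = X 0`, `y = X 1`, `z = X 2`. -/
theorem stmt_12 (q : MvPolynomial (Fin 3) ℂ) (hq : q.IsHomogeneous 2)
    (M : Matrix (Fin 3) (Fin 3) ℂ) (hM : M.IsSymm) (hMdet : M.det ≠ 0)
    (hqM : ∀ v : Fin 3 → ℂ, eval v q = v ⬝ᵥ M.mulVec v)
    (F : MvPolynomial (Fin 4) ℂ) (hF : F.IsHomogeneous 4)
    (hvan : ∀ x y z : ℂ, eval ![x, y, z] q = 0 → eval ![0, x, y, z] F = 0)
    (hvan' : ∀ (i : Fin 4) (x y z : ℂ), eval ![x, y, z] q = 0 →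
      eval ![0, x, y, z] (pderiv i F) = 0) :
    ∃ (α : ℂ) (a₁ b₂ : MvPolynomial (Fin 4) ℂ),
      a₁.IsHomogeneous 1 ∧ b₂.IsHomogeneous 2 ∧
      F = C α * (aeval ![(X 1 : MvPolynomial (Fin 4) ℂ), X 2, X 3] q) ^ 2
        + a₁ * X 0 * aeval ![(X 1 : MvPolynomial (Fin 4) ℂ), X 2, X 3] q
        + b₂ * X 0 ^ 2 := by
  classical
  have hqprime : Prime q := q_prime hq hM hMdet hqM
  have qne : q ≠ 0 := q_ne_zero hM hMdet hqM
  set P : Polynomial (MvPolynomial (Fin 3) ℂ) := finSuccEquiv ℂ 3 F with hP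
  set f₀ : MvPolynomial (Fin 3) ℂ := P.coeff 0 with hf₀
  set f₁ : MvPolynomial (Fin 3) ℂ := P.coeff 1 with hf₁
  set B : MvPolynomial (Fin 4) ℂ := (finSuccEquiv ℂ 3).symm (P.divX.divX) with hB
  have recon : F = rename Fin.succ f₀ + rename Fin.succ f₁ * X 0 + X 0 * (X 0 * B) := by
    apply (finSuccEquiv ℂ 3).injective
    rw [map_add, map_add, _root_.map_mul, _root_.map_mul, _root_.map_mul,
      fse_rename, fse_rename, finSuccEquiv_X_zero, hB, AlgEquiv.apply_symm_apply]
    have h1 := Polynomial.X_mul_divX_add P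
    have h2 := Polynomial.X_mul_divX_add P.divX
    rw [Polynomial.coeff_divX] at h2
    have hP' : finSuccEquiv ℂ 3 F = P := rfl
    rw [hP']
    conv_lhs => rw [← h1]
    conv_lhs => rw [← h2]
    norm_num
    ring
  -- evaluation helpers
  have hwsucc : ∀ (v : Fin 3 → ℂ) (f : MvPolynomial (Fin 3) ℂ),
      eval ![0, v 0, v 1, v 2] (rename Fin.succ f) = eval v f := by
    intro v f
    rw [eval_rename]
    have hcomp : (![0, v 0, v 1, v 2] : Fin 4 → ℂ) ∘ Fin.succ = v := by
      funext i; fin_cases i <;> rfl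
    rw [hcomp]
  have hv3 : ∀ v : Fin 3 → ℂ, (![v 0, v 1, v 2] : Fin 3 → ℂ) = v := by
    intro v; funext i; fin_cases i <;> rfl
  have hwX0 : ∀ v : Fin 3 → ℂ, eval ![0, v 0, v 1, v 2] (X 0 : MvPolynomial (Fin 4) ℂ) = 0 := by
    intro v; rw [eval_X]; rfl
  -- q ∣ f₀
  have hf0dvd : q ∣ f₀ := by
    apply vanish_dvd hqprime
    intro v hv
    have h := hvan (v 0) (v 1) (v 2) (by rw [hv3 v]; exact hv)
    rw [recon, map_add, map_add, _root_.map_mul, _root_.map_mul, _root_.map_mul,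
      hwsucc, hwsucc, hwX0] at h
    simpa using h
  -- q ∣ f₁
  have hf1dvd : q ∣ f₁ := by
    apply vanish_dvd hqprime
    intro v hv
    have h := hvan' 0 (v 0) (v 1) (v 2) (by rw [hv3 v]; exact hv)
    have hD : pderiv (0 : Fin 4) F
        = rename Fin.succ f₁ + (X 0 * B + X 0 * (B + X 0 * pderiv 0 B)) := by
      rw [recon, map_add, map_add, pderiv_mul, pderiv_mul, pderiv_mul,
        pderiv0_rename, pderiv0_rename, pderiv_X_self]
      ring
    rw [hD, map_add, map_add, _root_.map_mul, _root_.map_mul, hwsucc, hwX0] at h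
    simpa using h
  -- q ∣ pderiv j f₀
  have hdf0 : ∀ j : Fin 3, q ∣ pderiv j f₀ := by
    intro j
    apply vanish_dvd hqprime
    intro v hv
    have h := hvan' j.succ (v 0) (v 1) (v 2) (by rw [hv3 v]; exact hv)
    have hD : pderiv j.succ F
        = rename Fin.succ (pderiv j f₀) + rename Fin.succ (pderiv j f₁) * X 0
          + X 0 * (X 0 * pderiv j.succ B) := by
      rw [recon, map_add, map_add, pderiv_mul, pderiv_mul, pderiv_mul,
        pderiv_rename (Fin.succ_injective 3), pderiv_rename (Fin.succ_injective 3),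
        pderiv_X_of_ne (Fin.succ_ne_zero j).symm]
      ring
    rw [hD, map_add, map_add, _root_.map_mul, _root_.map_mul, _root_.map_mul,
      hwsucc, hwsucc, hwX0] at h
    simpa using h
  -- extract g, a, h
  obtain ⟨g, hg⟩ := hf0dvd
  obtain ⟨a, ha⟩ := hf1dvd
  have hdvdg : ∀ j : Fin 3, q ∣ pderiv j q * g := by
    intro j
    have h1 := hdf0 j
    rw [hg, pderiv_mul] at h1
    exact (dvd_add_left (dvd_mul_right q (pderiv j g))).mp h1
  have hkey : q ∣ C 2 * X 0 * g := by
    have hsum : (∑ k : Fin 3, C (M⁻¹ 0 k) * (pderiv k q * g)) = C 2 * X 0 * g := by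
      have hstep : (∑ k : Fin 3, C (M⁻¹ 0 k) * (pderiv k q * g))
          = (∑ k : Fin 3, C (M⁻¹ 0 k) * pderiv k q) * g := by
        rw [Finset.sum_mul]
        exact Finset.sum_congr rfl fun k _ => by ring
      rw [hstep, q_comb hM hMdet hqM 0]
    rw [← hsum]
    exact Finset.dvd_sum fun k _ => Dvd.dvd.mul_left (hdvdg k) _
  have hqg : q ∣ g := by
    rcases (hqprime.dvd_mul.mp hkey) with hcase | hcase
    · exfalso
      obtain ⟨w, hw⟩ := hcase
      have hne : (C 2 * X 0 : MvPolynomial (Fin 3) ℂ) ≠ 0 := by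
        intro h0
        have := congrArg (eval (fun _ => (1 : ℂ))) h0
        simpa using this
      have hwne : w ≠ 0 := by rintro rfl; rw [mul_zero] at hw; exact hne hw
      have hhom : (q * w).IsHomogeneous 1 := by
        rw [← hw]
        have : (C 2 * X 0 : MvPolynomial (Fin 3) ℂ).IsHomogeneous (0 + 1) :=
          (isHomogeneous_C _ _).mul (isHomogeneous_X _ _)
        simpa using this
      obtain ⟨_, _, hsum⟩ := factor_homog hhom qne hwne
      have := hq.totalDegree qne
      omega
    · exact hcase
  obtain ⟨h, hh⟩ := hqg
  -- homogeneity
  have hf0h : f₀.IsHomogeneous 4 := hF.finSuccEquiv_coeff_isHomogeneous 0 4 rfl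
  have hf1h : f₁.IsHomogeneous 3 := hF.finSuccEquiv_coeff_isHomogeneous 1 3 rfl
  have hqq : (q * q).IsHomogeneous 4 := by simpa using hq.mul hq
  have hhh : h.IsHomogeneous 0 := by
    apply quot_homog (n := 4) (m := 0) (mul_ne_zero qne qne) hqq
    have : q * q * h = f₀ := by rw [hg, hh]; ring
    rw [this]
    simpa using hf0h
  have hah : a.IsHomogeneous 1 := by
    apply quot_homog (n := 2) (m := 1) qne hq
    rw [← ha]
    simpa using hf1h
  have hBh : B.IsHomogeneous 2 := by
    apply quot_homog4 (n := 2) (m := 2) (pow_ne_zero 2 (X_ne_zero 0)) (isHomogeneous_X_pow 0 2)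
    have hXB : (X 0 : MvPolynomial (Fin 4) ℂ) ^ 2 * B
        = F - rename Fin.succ f₀ - rename Fin.succ f₁ * X 0 := by
      rw [recon]; ring
    rw [hXB]
    have h4 : (4 : ℕ) = 2 + 2 := rfl
    exact (hF.sub hf0h.rename_isHomogeneous).sub (hf1h.rename_isHomogeneous.mul (isHomogeneous_X _ _))
  -- conclusion
  refine ⟨coeff 0 h, rename Fin.succ a, B, hah.rename_isHomogeneous, hBh, ?_⟩
  have hQ : (aeval ![(X 1 : MvPolynomial (Fin 4) ℂ), X 2, X 3]) q
      = rename Fin.succ q := by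
    have hvec : (![(X 1 : MvPolynomial (Fin 4) ℂ), X 2, X 3]) = (X ∘ Fin.succ) := by
      funext i; fin_cases i <;> rfl
    rw [hvec]
    rw [rename_eq_aeval]
  have hαh : h = C (coeff 0 h) := homog_zero_eq_C hhh
  rw [recon, hg, hh, hαh, hQ, ha, _root_.map_mul, _root_.map_mul, _root_.map_mul, rename_C]
  simp only [coeff_zero_C]
  ring
end

section
/- Let a, b : ℂ × ℂ → ℂ be polynomial functions and define φ(t,x,y) = (a(x,y)·t/(a(x,y)·t + b(x,y)), x, y) on the open set U = {(t,x,y) ∈ ℂ³ : a(x,y)·t + b(x,y) ≠ 0}. Then φ is complex differentiable at every point of U, the determinant of its derivative Dφ_(t,x,y) equals a(x,y)·b(x,y)/(a(x,y)·t + b(x,y))², and for every (t,x,y) ∈ U with t ≠ 0, a(x,y) ≠ 0 and b(x,y) ≠ 0 one has det(Dφ_(t,x,y)) · (b(x,y)·(a(x,y)·t/(a(x,y)·t+b(x,y))))⁻¹ = (t·(a(x,y)·t + b(x,y)))⁻¹. -/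
open MvPolynomial

noncomputable def e3 : (ℂ × ℂ × ℂ) ≃ₗ[ℂ] (Fin 3 → ℂ) where
  toFun p := ![p.1, p.2.1, p.2.2]
  invFun f := (f 0, f 1, f 2)
  map_add' p q := by funext i; fin_cases i <;> simp
  map_smul' c p := by funext i; fin_cases i <;> simp
  left_inv p := by simp
  right_inv f := by funext i; fin_cases i <;> simp

lemma det_prod_snd (D : (ℂ × ℂ × ℂ) →L[ℂ] ℂ) :
    LinearMap.det (D.prod (ContinuousLinearMap.snd ℂ ℂ (ℂ × ℂ))).toLinearMap
      = D (1, 0, 0) := by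
  set B : Module.Basis (Fin 3) ℂ (ℂ × ℂ × ℂ) := Module.Basis.ofEquivFun e3
  rw [← LinearMap.det_toMatrix B]
  have hB : ∀ i, B i = e3.symm (Pi.single i 1) := fun i => congrFun (Module.Basis.coe_ofEquivFun e3) i
  have h0 : B 0 = (1, 0, 0) := by rw [hB]; rfl
  have h1 : B 1 = (0, 1, 0) := by rw [hB]; rfl
  have h2 : B 2 = (0, 0, 1) := by rw [hB]; rfl
  have hrepr : ∀ v : ℂ × ℂ × ℂ, ∀ i, B.repr v i = ![v.1, v.2.1, v.2.2] i := by
    intro v i; rfl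
  rw [Matrix.det_fin_three]
  simp only [LinearMap.toMatrix_apply, ContinuousLinearMap.coe_prod, LinearMap.prod_apply,
    Pi.prod, ContinuousLinearMap.coe_coe, h0, h1, h2]
  rw [hrepr, hrepr, hrepr, hrepr, hrepr, hrepr, hrepr, hrepr, hrepr]
  simp [ContinuousLinearMap.snd]

lemma eval_diff (q : MvPolynomial (Fin 2) ℂ) :
    Differentiable ℂ (fun p : ℂ × ℂ × ℂ => eval ![p.2.1, p.2.2] q) := by
  apply q.induction_on (fun k => ?_) (fun p q hp hq => ?_) (fun p i hp => ?_)
  · simp only [eval_C]; exact differentiable_const _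
  · simp only [map_add]; exact hp.add hq
  · simp only [map_mul, eval_X]
    refine hp.mul ?_
    fin_cases i
    · simpa using (differentiable_fst.comp differentiable_snd)
    · simpa using (differentiable_snd.comp differentiable_snd)

/-- The affine-chart computation for the volume preserving map (ix). For
polynomial functions `a, b` of `(x,y)`, the map `φ(t,x,y) = (a·t/(a·t+b), x, y)` is
holomorphic on `U = {a·t + b ≠ 0}`, has Jacobian determinant `a·b/(a·t+b)²`, and pulls back
the form `1/(b·t')` (with `t' = a·t/(a·t+b)`) to `1/(t·(a·t+b))`. -/
theorem stmt_14 (a b : MvPolynomial (Fin 2) ℂ)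
    (U : Set (ℂ × ℂ × ℂ))
    (hU : U = {p | eval ![p.2.1, p.2.2] a * p.1 + eval ![p.2.1, p.2.2] b ≠ 0})
    (φ : ℂ × ℂ × ℂ → ℂ × ℂ × ℂ)
    (hφ : ∀ p : ℂ × ℂ × ℂ,
      φ p = (eval ![p.2.1, p.2.2] a * p.1 /
        (eval ![p.2.1, p.2.2] a * p.1 + eval ![p.2.1, p.2.2] b), p.2.1, p.2.2)) :
    (∀ p ∈ U, DifferentiableAt ℂ φ p) ∧
    (∀ p ∈ U, LinearMap.det (fderiv ℂ φ p).toLinearMap =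
      eval ![p.2.1, p.2.2] a * eval ![p.2.1, p.2.2] b /
        (eval ![p.2.1, p.2.2] a * p.1 + eval ![p.2.1, p.2.2] b) ^ 2) ∧
    (∀ p ∈ U, p.1 ≠ 0 → eval ![p.2.1, p.2.2] a ≠ 0 → eval ![p.2.1, p.2.2] b ≠ 0 →
      LinearMap.det (fderiv ℂ φ p).toLinearMap *
        (eval ![p.2.1, p.2.2] b *
          (eval ![p.2.1, p.2.2] a * p.1 /
            (eval ![p.2.1, p.2.2] a * p.1 + eval ![p.2.1, p.2.2] b)))⁻¹
        = (p.1 * (eval ![p.2.1, p.2.2] a * p.1 + eval ![p.2.1, p.2.2] b))⁻¹) := by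
  set A : ℂ × ℂ × ℂ → ℂ := fun p => eval ![p.2.1, p.2.2] a with hA
  set Bf : ℂ × ℂ × ℂ → ℂ := fun p => eval ![p.2.1, p.2.2] b with hBf
  have hφ' : φ = fun p => (A p * p.1 / (A p * p.1 + Bf p), p.2) := by
    funext p; rw [hφ p]
  have hgd : ∀ p ∈ U, DifferentiableAt ℂ (fun p => A p * p.1 / (A p * p.1 + Bf p)) p := by
    intro p hp
    rw [hU] at hp
    have h1 : DifferentiableAt ℂ (fun p : ℂ × ℂ × ℂ => A p * p.1) p :=
      (eval_diff a).differentiableAt.mul differentiableAt_fst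
    have h2 : DifferentiableAt ℂ (fun p : ℂ × ℂ × ℂ => A p * p.1 + Bf p) p :=
      h1.add (eval_diff b).differentiableAt
    show DifferentiableAt ℂ
      (fun q : ℂ × ℂ × ℂ => (fun q : ℂ × ℂ × ℂ => A q * q.1) q /
        (fun q : ℂ × ℂ × ℂ => A q * q.1 + Bf q) q) p
    simp only [div_eq_mul_inv]
    exact h1.mul (h2.inv hp)
  have hdiff : ∀ p ∈ U, DifferentiableAt ℂ φ p := by
    intro p hp
    rw [hφ']
    exact DifferentiableAt.prodMk (hgd p hp) differentiableAt_snd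
  have hdet : ∀ p ∈ U, LinearMap.det (fderiv ℂ φ p).toLinearMap =
      A p * Bf p / (A p * p.1 + Bf p) ^ 2 := by
    intro p hp
    have hden : A p * p.1 + Bf p ≠ 0 := by rw [hU] at hp; exact hp
    have hg := hgd p hp
    have hfd : fderiv ℂ φ p =
        (fderiv ℂ (fun p => A p * p.1 / (A p * p.1 + Bf p)) p).prod
          (ContinuousLinearMap.snd ℂ ℂ (ℂ × ℂ)) := by
      rw [hφ']
      exact (HasFDerivAt.prodMk hg.hasFDerivAt (hasFDerivAt_snd)).fderiv
    rw [hfd, det_prod_snd]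
    set D := fderiv ℂ (fun p => A p * p.1 / (A p * p.1 + Bf p)) p with hD
    set v : ℂ × ℂ × ℂ := ((1 : ℂ), (0 : ℂ), (0 : ℂ)) with hv
    have hinner : HasDerivAt (fun s : ℂ => p + s • v) v 0 := by
      have := ((hasDerivAt_id (0 : ℂ)).smul_const v).const_add p
      simpa using this
    have hg' : HasFDerivAt (fun p => A p * p.1 / (A p * p.1 + Bf p)) D (p + (0 : ℂ) • v) := by
      rw [show p + (0 : ℂ) • v = p by simp]
      exact hg.hasFDerivAt
    have hline : HasDerivAt (fun s : ℂ => (fun p => A p * p.1 / (A p * p.1 + Bf p))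
        (p + s • v)) (D v) 0 := by have := HasFDerivAt.comp_hasDerivAt (0 : ℂ) hg' hinner; exact this
    have hfun : (fun s : ℂ => (fun p => A p * p.1 / (A p * p.1 + Bf p)) (p + s • v))
        = fun s : ℂ => A p * (p.1 + s) / (A p * (p.1 + s) + Bf p) := by
      funext s
      have hAc : A (p + s • v) = A p := by simp [hA, hv]
      have hBc : Bf (p + s • v) = Bf p := by simp [hBf, hv]
      have hfst : (p + s • v).1 = p.1 + s := by simp [hv]
      simp only [hAc, hBc, hfst]
    rw [hfun] at hline
    have hnum : HasDerivAt (fun s : ℂ => A p * (p.1 + s)) (A p) 0 := by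
      have := ((hasDerivAt_id (0 : ℂ)).const_add p.1).const_mul (A p)
      simpa using this
    have hden' : HasDerivAt (fun s : ℂ => A p * (p.1 + s) + Bf p) (A p) 0 :=
      hnum.add_const _
    have hdiv := hnum.div hden' (by simpa using hden)
    have heq := hline.unique hdiv
    rw [heq]
    simp only [add_zero]
    congr 1
    ring
  refine ⟨hdiff, hdet, ?_⟩
  intro p hp ht ha hb
  have hden : A p * p.1 + Bf p ≠ 0 := by rw [hU] at hp; exact hp
  rw [hdet p hp]
  have ha' : A p ≠ 0 := ha
  have hb' : Bf p ≠ 0 := hb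
  show A p * Bf p / (A p * p.1 + Bf p) ^ 2 * (Bf p * (A p * p.1 / (A p * p.1 + Bf p)))⁻¹ = (p.1 * (A p * p.1 + Bf p))⁻¹
  field_simp
end
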